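/- arXiv:1002.3150 — 4 statements merged into one kernel-verified Lean document; each statement's English description precedes it below -/
import Mathlib

section
/- Let A be a commutative ring, M a free A-module of finite rank, N an A-module, and {N_λ}_{λ∈Λ} a family of A-submodules of N. Then, identifying each N_λ ⊗_A M with its image in N ⊗_A M (the maps N_λ ⊗_A M → N ⊗_A M are injective since M is flat), one has the equality of submodules of N ⊗_A M: the image of (⋂_{λ∈Λ} N_λ) ⊗_A M equals ⋂_{λ∈Λ} (image of N_λ ⊗_A M). -/
/-!
A basis `b` of `M` identifies `N ⊗[A] M` with `ι →₀ N`, naturally in `N`. Under this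
identification the image of `P ⊗[A] M` for a submodule `P ≤ N` consists of the families all of
whose coordinates lie in `P`, and a family has all coordinates in every `N_λ` exactly when it has
all coordinates in `⋂ λ, N_λ`.
-/

open TensorProduct

theorem Finsupp.range_mapRange_linearMap_subtype {R N ι : Type*} [Semiring R] [AddCommMonoid N]
    [Module R N] (p : Submodule R N) :
    LinearMap.range (Finsupp.mapRange.linearMap p.subtype : (ι →₀ p) →ₗ[R] ι →₀ N) =
      ⨅ i, p.comap (Finsupp.lapply i) := by
  refine SetLike.coe_injective ((Finsupp.range_mapRange _ p.subtype.map_zero).trans ?_)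
  ext
  simp

theorem TensorProduct.equivFinsuppOfBasisRight_comp_rTensor {R M N P ι : Type*}
    [CommSemiring R] [AddCommMonoid M] [Module R M] [AddCommMonoid N] [Module R N]
    [AddCommMonoid P] [Module R P] [DecidableEq ι] (b : Module.Basis ι R M) (f : P →ₗ[R] N) :
    (equivFinsuppOfBasisRight b).toLinearMap ∘ₗ f.rTensor M =
      Finsupp.mapRange.linearMap f ∘ₗ (equivFinsuppOfBasisRight b).toLinearMap := by
  ext p m i
  simp

theorem Submodule.range_rTensor_subtype_eq_iInf_comap {R M N ι : Type*} [CommSemiring R]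
    [AddCommMonoid M] [Module R M] [AddCommMonoid N] [Module R N] [DecidableEq ι]
    (b : Module.Basis ι R M) (p : Submodule R N) :
    LinearMap.range (p.subtype.rTensor M) =
      ⨅ i, p.comap (Finsupp.lapply i ∘ₗ (equivFinsuppOfBasisRight b).toLinearMap) := by
  have h := congr(LinearMap.range $(equivFinsuppOfBasisRight_comp_rTensor b p.subtype))
  rw [LinearMap.range_comp, LinearEquiv.range_comp, Finsupp.range_mapRange_linearMap_subtype] at h
  simp_rw [Submodule.comap_comp, ← Submodule.comap_iInf, ← h,
    Submodule.comap_map_eq_of_injective (equivFinsuppOfBasisRight b).injective]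

theorem intersection_tensor_free_finite_rank_general
    (A : Type*) [CommRing A]
    (M : Type*) [AddCommGroup M] [Module A M] [Module.Free A M]
    (N : Type*) [AddCommGroup N] [Module A N]
    {Λ : Type*} (Nf : Λ → Submodule A N) :
    LinearMap.range
        (TensorProduct.map (⨅ l, Nf l : Submodule A N).subtype (LinearMap.id : M →ₗ[A] M))
      = ⨅ l, LinearMap.range
        (TensorProduct.map (Nf l).subtype (LinearMap.id : M →ₗ[A] M)) := by
  classical
  simp_rw [← LinearMap.rTensor_def,
    Submodule.range_rTensor_subtype_eq_iInf_comap (Module.Free.chooseBasis A M),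
    Submodule.comap_iInf]
  exact iInf_comm

/-- Let `A` be a commutative ring, `M` a free `A`-module of finite rank,
`N` an `A`-module, and `{N_λ}_{λ ∈ Λ}` a family of `A`-submodules of `N`. Identifying each
`N_λ ⊗[A] M` with its image in `N ⊗[A] M` (via the canonical map `N_λ ⊗ M → N ⊗ M` induced
by the inclusion `N_λ ↪ N`, which is injective since `M` is flat), the image of
`(⋂_λ N_λ) ⊗[A] M` in `N ⊗[A] M` equals the intersection of the images of the
`N_λ ⊗[A] M` in `N ⊗[A] M`. -/
theorem intersection_tensor_free_finite_rank
    (A : Type*) [CommRing A]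
    (M : Type*) [AddCommGroup M] [Module A M] [Module.Free A M] [Module.Finite A M]
    (N : Type*) [AddCommGroup N] [Module A N]
    {Λ : Type*} (Nf : Λ → Submodule A N) :
    LinearMap.range
        (TensorProduct.map (⨅ l, Nf l : Submodule A N).subtype (LinearMap.id : M →ₗ[A] M))
      = ⨅ l, LinearMap.range
        (TensorProduct.map (Nf l).subtype (LinearMap.id : M →ₗ[A] M)) :=
  intersection_tensor_free_finite_rank_general A M N Nf
end

section
/- Let G be a group, R a noetherian integral domain with fraction field K, and L a free R-module of finite rank d ≥ 1 equipped with an R-linear action of G (a representation ρ_L : G → Aut_R(L)); set V := L ⊗_R K with the induced representation ρ_V of G. Suppose there exists a set S of prime ideals of R such that (i) ⋂_{p∈S} p = (0), and (ii) for every p ∈ S the reduced representation ρ̄_{L,p} of G on the κ(p)-vector space L ⊗_R κ(p) is irreducible, where κ(p) = R_p/pR_p is the residue field of the localization R_p. Then ρ_V is irreducible, i.e., V has no G-invariant K-subspace other than 0 and V. -/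
/-- For a representation `ρ` of a group `G` on an `R`-module `L` and a prime ideal `p` of
`R`, this says that the reduction of `ρ` at `p`, i.e. the induced representation of `G` on
the `κ(p)`-vector space `κ(p) ⊗[R] L` — where `κ(p) = R_p/pR_p` is the residue field of the
localization `R_p` — is irreducible: its only `G`-invariant `κ(p)`-subspaces are `0` and
the whole space. -/
def IsResiduallyIrreducible {R L G : Type*} [CommRing R] [AddCommGroup L] [Module R L]
    [Group G] (ρ : Representation R G L) (p : Ideal R) (hp : p.IsPrime) : Prop :=
  letI := hp
  ∀ W : Submodule (IsLocalRing.ResidueField (Localization.AtPrime p))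
      (TensorProduct R (IsLocalRing.ResidueField (Localization.AtPrime p)) L),
    (∀ g : G, ∀ x ∈ W,
        LinearMap.baseChange (IsLocalRing.ResidueField (Localization.AtPrime p)) (ρ g) x ∈ W) →
    W = ⊥ ∨ W = ⊤

/-! Let `M := W ∩ L` be the lattice of `W`: it is `G`-stable, `W = K • M`, and `L ⧸ M` is
torsion-free. For `p ∈ S` the `κ(p)`-span of the image of `M` in `κ(p) ⊗ L` is `G`-stable, so it
is `0` or everything. If it is everything for one `p`, then `κ(p) ⊗ (L ⧸ M) = 0`, so by Nakayama
`p` lies outside the support of the finite module `L ⧸ M`; a nonzero torsion-free module over a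
domain has full support, hence `M = L` and `W = V`. Otherwise every coordinate of every element
of `M` lies in each `p ∈ S`, hence in `⋂ S = 0`, so `M = 0` and `W = 0`. -/

open TensorProduct

namespace Submodule

variable {R A L : Type*} [CommRing R] [CommRing A] [Algebra R A] [AddCommGroup L] [Module R L]

def integralPoints (W : Submodule A (A ⊗[R] L)) : Submodule R L :=
  (W.restrictScalars R).comap (TensorProduct.mk R A L 1)

@[simp]
lemma mem_integralPoints {W : Submodule A (A ⊗[R] L)} {x : L} :
    x ∈ W.integralPoints ↔ (1 : A) ⊗ₜ[R] x ∈ W :=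
  Iff.rfl

lemma mapsTo_integralPoints {W : Submodule A (A ⊗[R] L)} {f : L →ₗ[R] L}
    (hf : ∀ y ∈ W, f.baseChange A y ∈ W) : ∀ x ∈ W.integralPoints, f x ∈ W.integralPoints :=
  fun x hx ↦ by simpa using hf _ hx

lemma exists_smul_eq_one_tmul_integralPoints (S : Submonoid R) [IsLocalization S A]
    (W : Submodule A (A ⊗[R] L)) {w : A ⊗[R] L} (hw : w ∈ W) :
    ∃ s ∈ S, ∃ x ∈ W.integralPoints, s • w = 1 ⊗ₜ x := by
  obtain ⟨⟨x, s⟩, hx⟩ := IsLocalizedModule.surj S (TensorProduct.mk R A L 1) w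
  replace hx : (s : R) • w = 1 ⊗ₜ x := hx
  have hsw := W.smul_of_tower_mem (s : R) hw
  rw [hx] at hsw
  exact ⟨s, s.2, x, hsw, hx⟩

lemma smul_mem_integralPoints_iff (S : Submonoid R) [IsLocalization S A]
    (W : Submodule A (A ⊗[R] L)) {s : R} (hs : s ∈ S) {x : L} :
    s • x ∈ W.integralPoints ↔ x ∈ W.integralPoints := by
  simp only [mem_integralPoints, tmul_smul, ← algebraMap_smul A s]
  exact W.smul_mem_iff_of_isUnit (IsLocalization.map_units A ⟨s, hs⟩)

lemma eq_top_of_integralPoints_eq_top (S : Submonoid R) [IsLocalization S A]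
    {W : Submodule A (A ⊗[R] L)} (h : W.integralPoints = ⊤) : W = ⊤ := by
  refine eq_top_iff.2 fun w _ ↦ ?_
  obtain ⟨s, hs, x, -, hx⟩ := exists_smul_eq_one_tmul_integralPoints S ⊤ (mem_top (x := w))
  have hsw : algebraMap R A s • w ∈ W := by
    rw [algebraMap_smul, hx, ← mem_integralPoints, h]
    exact mem_top
  exact (W.smul_mem_iff_of_isUnit (IsLocalization.map_units A ⟨s, hs⟩)).1 hsw

lemma eq_bot_of_integralPoints_eq_bot (S : Submonoid R) [IsLocalization S A]
    {W : Submodule A (A ⊗[R] L)} (h : W.integralPoints = ⊥) : W = ⊥ := by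
  refine eq_bot_iff.2 fun w hw ↦ ?_
  obtain ⟨s, hs, x, hx, hsw⟩ := exists_smul_eq_one_tmul_integralPoints S W hw
  rw [h, mem_bot] at hx
  rw [hx, tmul_zero, ← algebraMap_smul A s] at hsw
  exact (mem_bot A).2 ((IsLocalization.map_units A ⟨s, hs⟩).smul_eq_zero.1 hsw)

instance isTorsionFree_quotient_integralPoints [IsDomain R] {K : Type*} [Field K] [Algebra R K]
    [IsFractionRing R K] (W : Submodule K (K ⊗[R] L)) :
    Module.IsTorsionFree R (L ⧸ W.integralPoints) := by
  refine Module.IsTorsionFree.of_smul_eq_zero fun r x hrx ↦ or_iff_not_imp_left.2 fun hr ↦ ?_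
  obtain ⟨x, rfl⟩ := Quotient.mk_surjective _ x
  rw [← Quotient.mk_smul] at hrx
  rw [Quotient.mk_eq_zero] at hrx ⊢
  exact (smul_mem_integralPoints_iff (nonZeroDivisors R) W
    (mem_nonZeroDivisors_of_ne_zero hr)).1 hrx

variable (A) in
lemma mapsTo_baseChange {M : Submodule R L} {f : L →ₗ[R] L} (hf : ∀ x ∈ M, f x ∈ M) :
    ∀ y ∈ M.baseChange A, f.baseChange A y ∈ M.baseChange A := by
  rintro _ ⟨z, rfl⟩
  refine ⟨(f.restrict hf).baseChange A z, ?_⟩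
  rw [← LinearMap.comp_apply, ← LinearMap.baseChange_comp, LinearMap.subtype_comp_restrict,
    LinearMap.domRestrict, LinearMap.baseChange_comp, LinearMap.comp_apply]

variable (A) in
lemma subsingleton_tensorProduct_quotient_of_baseChange_eq_top {M : Submodule R L}
    (h : M.baseChange A = ⊤) : Subsingleton (A ⊗[R] (L ⧸ M)) := by
  refine subsingleton_of_forall_eq 0 fun y ↦ ?_
  obtain ⟨z, rfl⟩ := LinearMap.baseChange_surjective A M.mkQ_surjective y
  obtain ⟨z, rfl⟩ : z ∈ M.baseChange A := h ▸ mem_top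
  have hM : M.mkQ ∘ₗ M.subtype = 0 := by ext; simp
  rw [← LinearMap.comp_apply, ← LinearMap.baseChange_comp, hM, LinearMap.baseChange_zero,
    LinearMap.zero_apply]

lemma eq_top_of_baseChange_residueField_eq_top [IsDomain R] [Module.Finite R L]
    {M : Submodule R L} [Module.IsTorsionFree R (L ⧸ M)] (p : Ideal R) [p.IsPrime]
    (h : M.baseChange p.ResidueField = ⊤) : M = ⊤ := by
  have hκ := subsingleton_tensorProduct_quotient_of_baseChange_eq_top _ h
  have hp : ⟨p, ‹_›⟩ ∉ Module.support R (L ⧸ M) := by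
    rw [Module.mem_support_iff_nontrivial_residueField_tensorProduct]
    exact not_nontrivial_iff_subsingleton.2 hκ
  rw [← Quotient.subsingleton_iff, ← not_nontrivial_iff_subsingleton]
  intro
  rw [Module.support_of_noZeroSMulDivisors] at hp
  exact hp trivial

end Submodule

lemma Module.Basis.one_tmul_eq_zero_iff {R L ι : Type*} [CommRing R] [AddCommGroup L]
    [Module R L] (b : Basis ι R L) (C : Type*) [CommRing C] [Algebra R C] (x : L) :
    (1 : C) ⊗ₜ[R] x = 0 ↔ ∀ i, algebraMap R C (b.repr x i) = 0 := by
  rw [← (b.baseChange C).repr.map_eq_zero_iff, Finsupp.ext_iff]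
  simp [Algebra.algebraMap_eq_smul_one]

lemma Submodule.eq_bot_of_baseChange_residueField_eq_bot {R L : Type*} [CommRing R]
    [AddCommGroup L] [Module R L] [Module.Free R L] {S : Set (Ideal R)}
    (hSprime : ∀ p ∈ S, p.IsPrime) (hS : sInf S = ⊥) {M : Submodule R L}
    (h : ∀ p ∈ S, ∀ _ : Ideal.IsPrime p, M.baseChange (Ideal.ResidueField p) = ⊥) : M = ⊥ := by
  let b := Module.Free.chooseBasis R L
  refine eq_bot_iff.2 fun x hx ↦ (mem_bot R).2 (b.repr.map_eq_zero_iff.1 (Finsupp.ext fun i ↦ ?_))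
  have hmem : b.repr x i ∈ sInf S := Submodule.mem_sInf.2 fun p hp ↦ by
    have hpp := hSprime p hp
    have hx0 : (1 : Ideal.ResidueField p) ⊗ₜ[R] x = 0 := by
      simpa [h p hp hpp] using tmul_mem_baseChange_of_mem (1 : Ideal.ResidueField p) hx
    simpa using (b.one_tmul_eq_zero_iff _ x).1 hx0 i
  simpa [hS] using hmem

theorem repn_irreducible_of_residually_irreducible_family_general
    (G : Type*) [Group G]
    (R : Type*) [CommRing R] [IsDomain R]
    (K : Type*) [Field K] [Algebra R K] [IsFractionRing R K]
    (L : Type*) [AddCommGroup L] [Module R L] [Module.Free R L] [Module.Finite R L]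
    (ρ : Representation R G L)
    (S : Set (Ideal R))
    (hSprime : ∀ p ∈ S, p.IsPrime)
    (hSint : sInf S = ⊥)
    (hSirr : ∀ p ∈ S, ∀ hp : p.IsPrime, IsResiduallyIrreducible ρ p hp) :
    ∀ W : Submodule K (TensorProduct R K L),
      (∀ g : G, ∀ x ∈ W, LinearMap.baseChange K (ρ g) x ∈ W) → W = ⊥ ∨ W = ⊤ := by
  intro W hW
  set M := W.integralPoints
  have hM (g : G) : ∀ x ∈ M, ρ g x ∈ M := Submodule.mapsTo_integralPoints (hW g)
  have hres (p : Ideal R) (hp : p ∈ S) [p.IsPrime] :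
      M.baseChange p.ResidueField = ⊥ ∨ M.baseChange p.ResidueField = ⊤ :=
    hSirr p hp _ _ fun g ↦ Submodule.mapsTo_baseChange _ (hM g)
  by_cases htop : ∃ p ∈ S, ∃ _ : p.IsPrime, M.baseChange p.ResidueField = ⊤
  · obtain ⟨p, -, _, hp⟩ := htop
    exact .inr (W.eq_top_of_integralPoints_eq_top (nonZeroDivisors R)
      (Submodule.eq_top_of_baseChange_residueField_eq_top p hp))
  · push Not at htop
    refine .inl (W.eq_bot_of_integralPoints_eq_bot (nonZeroDivisors R) ?_)
    exact Submodule.eq_bot_of_baseChange_residueField_eq_bot hSprime hSint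
      fun p hp _ ↦ (hres p hp).resolve_right (htop p hp _)

/-- the irreducibility criterion, Theorem 3.3 of the paper. Let `G` be a
group, `R` a noetherian integral domain with fraction field `K`, and `L` a free `R`-module
of finite rank `d ≥ 1` with a representation `ρ : G → Aut_R(L)`; set `V := K ⊗_R L` with
the induced representation `ρ_V`. If there is a set `S` of prime ideals of `R` with
`⋂_{p ∈ S} p = (0)` such that the reduction of `ρ` at every `p ∈ S` is irreducible, then
`ρ_V` is irreducible: `V` has no `G`-invariant `K`-subspace other than `0` and `V`. -/
theorem repn_irreducible_of_residually_irreducible_family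
    (G : Type*) [Group G]
    (R : Type*) [CommRing R] [IsDomain R] [IsNoetherianRing R]
    (K : Type*) [Field K] [Algebra R K] [IsFractionRing R K]
    (L : Type*) [AddCommGroup L] [Module R L] [Module.Free R L] [Module.Finite R L]
    [Nontrivial L]
    (ρ : Representation R G L)
    (S : Set (Ideal R))
    (hSprime : ∀ p ∈ S, p.IsPrime)
    (hSint : sInf S = ⊥)
    (hSirr : ∀ p ∈ S, ∀ hp : p.IsPrime, IsResiduallyIrreducible ρ p hp) :
    ∀ W : Submodule K (TensorProduct R K L),
      (∀ g : G, ∀ x ∈ W, LinearMap.baseChange K (ρ g) x ∈ W) → W = ⊥ ∨ W = ⊤ :=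
  repn_irreducible_of_residually_irreducible_family_general G R K L ρ S hSprime hSint hSirr
end

section
/- Let G be a group, R a noetherian integral domain with fraction field K, and L a free R-module of finite rank d ≥ 1 with a representation ρ_L : G → Aut_R(L); set V := L ⊗_R K with the induced representation ρ_V. If the reduced representation ρ̄_{L,p} of G on L ⊗_R κ(p) is irreducible for infinitely many prime ideals p of R of height 1, then ρ_V is irreducible. -/
/-!
Suppose `W` is a proper nonzero `G`-stable subspace of `K ⊗ L`. Its contraction
`M = {x | 1 ⊗ x ∈ W}` is a `G`-stable submodule of `L` such that `L ⧸ M` is finite, nonzero and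
torsion-free. Choose `0 ≠ m ∈ M` and a nonzero coordinate `c` of `m`. The height-one primes
containing `c` are minimal over `(c)`, hence finitely many, so some residually irreducible `p`
avoids `c`. The image of `κ(p) ⊗ M` in `κ(p) ⊗ L` is then `G`-stable, contains `1 ⊗ m ≠ 0`, and is
proper because `κ(p) ⊗ (L ⧸ M) ≠ 0` by Nakayama.
-/

open TensorProduct

lemma finite_setOf_height_one_prime_mem {R : Type*} [CommRing R] [IsNoetherianRing R] {c : R}
    (hc : c ≠ 0) :
    {p : Ideal R | p.IsPrime ∧ (∀ q : Ideal R, q.IsPrime → q < p → q = ⊥) ∧ c ∈ p}.Finite := by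
  refine (Ideal.finite_minimalPrimes_of_isNoetherianRing R (Ideal.span {c})).subset ?_
  rintro p ⟨hp, hheight, hcp⟩
  refine ⟨⟨hp, Ideal.span_singleton_le_iff_mem p |>.mpr hcp⟩, fun q ⟨hq, hcq⟩ hqp => ?_⟩
  obtain rfl | hlt := hqp.eq_or_lt
  · exact le_rfl
  · have : c ∈ (⊥ : Ideal R) := hheight q hq hlt ▸ (Ideal.span_singleton_le_iff_mem q).mp hcq
    exact absurd (Ideal.mem_bot.mp this) hc

section Contraction

variable {R K L : Type*} [CommRing R] [Field K] [Algebra R K] [AddCommGroup L] [Module R L]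

variable (R) in
def Submodule.contraction (W : Submodule K (K ⊗[R] L)) : Submodule R L :=
  (W.restrictScalars R).comap (TensorProduct.mk R K L 1)

variable {W : Submodule K (K ⊗[R] L)}

lemma Submodule.mem_contraction {x : L} : x ∈ W.contraction R ↔ (1 : K) ⊗ₜ[R] x ∈ W := Iff.rfl

lemma Submodule.baseChange_contraction_le : (W.contraction R).baseChange K ≤ W := by
  rw [baseChange_eq_span, span_le]
  rintro _ ⟨x, hx, rfl⟩
  exact hx

lemma Submodule.contraction_ne_top (hW : W ≠ ⊤) : W.contraction R ≠ ⊤ := fun h =>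
  hW <| top_le_iff.mp <| baseChange_top (R := R) (M := L) K ▸ h ▸ baseChange_contraction_le

lemma Submodule.contraction_le_comap {f : L →ₗ[R] L} (hf : ∀ x ∈ W, f.baseChange K x ∈ W) :
    W.contraction R ≤ (W.contraction R).comap f := fun x hx => by
  simpa [mem_contraction] using hf _ hx

variable [IsDomain R] [IsFractionRing R K]

instance Submodule.isTorsionFree_quotient_contraction :
    Module.IsTorsionFree R (L ⧸ W.contraction R) := by
  refine Module.IsTorsionFree.of_smul_eq_zero fun r n hrn => or_iff_not_imp_left.mpr fun hr => ?_
  obtain ⟨x, rfl⟩ := (W.contraction R).mkQ_surjective n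
  rw [← map_smul, mkQ_apply, Quotient.mk_eq_zero, mem_contraction] at hrn
  rw [mkQ_apply, Quotient.mk_eq_zero, mem_contraction]
  have hr' : algebraMap R K r ≠ 0 := (map_ne_zero_iff _ (IsFractionRing.injective R K)).mpr hr
  rw [tmul_smul, ← algebraMap_smul K r] at hrn
  simpa only [inv_smul_smul₀ hr'] using W.smul_mem (algebraMap R K r)⁻¹ hrn

lemma Submodule.contraction_ne_bot (hW : W ≠ ⊥) : W.contraction R ≠ ⊥ := by
  have : IsLocalizedModule (nonZeroDivisors R) (TensorProduct.mk R K L 1) :=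
    (isLocalizedModule_iff_isBaseChange _ K _).mpr (TensorProduct.isBaseChange R L K)
  contrapose! hW
  refine eq_bot_iff.mpr fun w hw => ?_
  obtain ⟨⟨x, s⟩, hs⟩ := IsLocalizedModule.surj (nonZeroDivisors R) (TensorProduct.mk R K L 1) w
  have hx : x ∈ W.contraction R := by
    rw [mem_contraction, ← mk_apply, ← hs, Submonoid.smul_def, ← algebraMap_smul K]
    exact W.smul_mem _ hw
  rw [hW, mem_bot] at hx
  have hs0 : algebraMap R K s ≠ 0 := IsFractionRing.to_map_ne_zero_of_mem_nonZeroDivisors s.2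
  rw [hx, map_zero, Submonoid.smul_def, ← algebraMap_smul K, smul_eq_zero] at hs
  exact (mem_bot K).mpr (hs.resolve_left hs0)

end Contraction

section Reduction

variable {R L : Type*} [CommRing R] [AddCommGroup L] [Module R L]

lemma Submodule.baseChange_le_comap_baseChange {A : Type*} [CommRing A] [Algebra R A]
    {M : Submodule R L} {f : L →ₗ[R] L} (hf : M ≤ M.comap f) :
    M.baseChange A ≤ (M.baseChange A).comap (f.baseChange A) := by
  refine (baseChange_eq_span A M).le.trans (span_le.mpr ?_)
  rintro _ ⟨x, hx, rfl⟩
  simpa using tmul_mem_baseChange_of_mem (1 : A) (show f x ∈ M from hf hx)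

lemma Submodule.baseChange_ne_top {A : Type*} [CommRing A] [Algebra R A] (M : Submodule R L)
    [Nontrivial (A ⊗[R] (L ⧸ M))] : M.baseChange A ≠ ⊤ := by
  intro h
  have hzero : M.mkQ.baseChange A = 0 := by
    rw [← LinearMap.ker_eq_top, eq_top_iff, ← h]
    rintro _ ⟨t, rfl⟩
    rw [LinearMap.mem_ker, ← LinearMap.comp_apply, ← LinearMap.baseChange_comp,
      LinearMap.range_le_ker_iff.mp (by rw [range_subtype, ker_mkQ]), LinearMap.baseChange_zero,
      LinearMap.zero_apply]
  have hsurj := LinearMap.baseChange_surjective A M.mkQ_surjective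
  obtain ⟨u, v, huv⟩ := exists_pair_ne (A ⊗[R] (L ⧸ M))
  obtain ⟨x, rfl⟩ := hsurj u
  obtain ⟨y, rfl⟩ := hsurj v
  simp [hzero] at huv

lemma Module.Basis.one_tmul_ne_zero {ι A : Type*} [CommRing A] [Algebra R A] (b : Basis ι R L)
    {m : L} {i : ι} (h : algebraMap R A (b.repr m i) ≠ 0) : (1 : A) ⊗ₜ[R] m ≠ 0 := by
  intro h0
  apply h
  simpa [Algebra.algebraMap_eq_smul_one] using
    congrArg (fun t => TensorProduct.rid R A (LinearMap.lTensor A (b.coord i) t)) h0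

lemma nontrivial_residueField_tensorProduct_of_isTorsionFree [IsDomain R] [Module.Finite R L]
    [Module.IsTorsionFree R L] [Nontrivial L] (p : Ideal R) [p.IsPrime] :
    Nontrivial (p.ResidueField ⊗[R] L) := by
  obtain ⟨x, hx⟩ := exists_ne (0 : L)
  refine (Module.mem_support_iff_nontrivial_residueField_tensorProduct ⟨p, ‹_›⟩).mp ?_
  exact Module.mem_support_iff'.mpr ⟨x, fun r hr => smul_ne_zero (fun h => hr (h ▸ p.zero_mem)) hx⟩

end Reduction

theorem repn_irreducible_of_infinitely_many_height_one_residually_irreducible_general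
    (G : Type*) [Group G]
    (R : Type*) [CommRing R] [IsDomain R] [IsNoetherianRing R]
    (K : Type*) [Field K] [Algebra R K] [IsFractionRing R K]
    (L : Type*) [AddCommGroup L] [Module R L] [Module.Free R L] [Module.Finite R L]
    (ρ : Representation R G L)
    (hinf : {p : Ideal R | ∃ hp : p.IsPrime, p ≠ ⊥ ∧
        (∀ q : Ideal R, q.IsPrime → q < p → q = ⊥) ∧
        IsResiduallyIrreducible ρ p hp}.Infinite) :
    ∀ W : Submodule K (TensorProduct R K L),
      (∀ g : G, ∀ x ∈ W, LinearMap.baseChange K (ρ g) x ∈ W) → W = ⊥ ∨ W = ⊤ := by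
  intro W hW
  by_contra! ⟨hW_bot, hW_top⟩
  set M := W.contraction R
  obtain ⟨m, hmM, hm⟩ := M.ne_bot_iff.mp (Submodule.contraction_ne_bot hW_bot)
  let b := Module.Free.chooseBasis R L
  obtain ⟨i, hi⟩ : ∃ i, b.repr m i ≠ 0 := Finsupp.ne_iff.mp (b.repr.map_ne_zero_iff.mpr hm)
  obtain ⟨p, ⟨hp, -, hheight, hirr⟩, hip⟩ :=
    (hinf.sdiff (finite_setOf_height_one_prime_mem hi)).nonempty
  have hi_p : algebraMap R p.ResidueField (b.repr m i) ≠ 0 := fun h =>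
    hip ⟨hp, hheight, Ideal.algebraMap_residueField_eq_zero.mp h⟩
  have : Nontrivial (L ⧸ M) := Submodule.Quotient.nontrivial_iff.mpr
    (Submodule.contraction_ne_top hW_top)
  have := nontrivial_residueField_tensorProduct_of_isTorsionFree (L := L ⧸ M) p
  rcases hirr (M.baseChange _) (fun g => Submodule.baseChange_le_comap_baseChange
    (Submodule.contraction_le_comap (hW g))) with h | h
  · exact b.one_tmul_ne_zero hi_p <|
      (Submodule.mem_bot _).mp (h ▸ Submodule.tmul_mem_baseChange_of_mem 1 hmM)
  · exact M.baseChange_ne_top h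

/-- Corollary 3.6 of the paper. Let `G` be a group, `R` a noetherian
integral domain with fraction field `K`, and `L` a free `R`-module of finite rank `d ≥ 1`
with a representation `ρ : G → Aut_R(L)`; set `V := K ⊗_R L` with the induced
representation `ρ_V`. If the reduction of `ρ` at `p` is irreducible for infinitely many
prime ideals `p` of `R` of height `1` (i.e. `p ≠ 0` and the only prime ideal strictly
contained in `p` is the zero ideal), then `ρ_V` is irreducible. -/
theorem repn_irreducible_of_infinitely_many_height_one_residually_irreducible
    (G : Type*) [Group G]
    (R : Type*) [CommRing R] [IsDomain R] [IsNoetherianRing R]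
    (K : Type*) [Field K] [Algebra R K] [IsFractionRing R K]
    (L : Type*) [AddCommGroup L] [Module R L] [Module.Free R L] [Module.Finite R L]
    [Nontrivial L]
    (ρ : Representation R G L)
    (hinf : {p : Ideal R | ∃ hp : p.IsPrime, p ≠ ⊥ ∧
        (∀ q : Ideal R, q.IsPrime → q < p → q = ⊥) ∧
        IsResiduallyIrreducible ρ p hp}.Infinite) :
    ∀ W : Submodule K (TensorProduct R K L),
      (∀ g : G, ∀ x ∈ W, LinearMap.baseChange K (ρ g) x ∈ W) → W = ⊥ ∨ W = ⊤ :=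
  repn_irreducible_of_infinitely_many_height_one_residually_irreducible_general G R K L ρ hinf
end

section
/- Let R be a local noetherian integral domain with maximal ideal m and fraction field K, let G be a group, and let L be a free R-module of finite rank d ≥ 1 with a representation ρ_L : G → Aut_R(L); set V := L ⊗_R K with the induced representation ρ_V. Suppose that the reduced representation ρ̄_{L,m} of G on the R/m-vector space L/mL is irreducible, and that there exists a set S of prime ideals of R such that (i) ⋂_{p∈S} p = (0) and (ii) R/p is a discrete valuation ring for every p ∈ S. Then ρ_V is irreducible. -/
/-- `R/p` is a discrete valuation ring (where `p` is a prime ideal, so that `R/p` is a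
domain). -/
def QuotientIsDVR {R : Type*} [CommRing R] (p : Ideal R) (hp : p.IsPrime) : Prop :=
  letI := hp
  IsDiscreteValuationRing (R ⧸ p)

open TensorProduct IsLocalRing
open scoped nonZeroDivisors

/-! If `W` were a `G`-stable subspace of `V` other than `0` and `V`, the lattice `M = L ∩ W`
would contain some `x` with `ψ x ≠ 0` and be killed by some `φ` with `φ y ≠ 0`, for
`R`-linear functionals `ψ, φ` on `L`. Choose `p ∈ S` not containing `ψ x * φ y`. In
`F = (R/p) ⊗ L` the saturation `N` of the image of `M` is `G`-stable and is neither `0` (it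
contains `1 ⊗ x`) nor `F` (`φ` kills it but not `1 ⊗ y`). But for a uniformizer `π` of the DVR
`R/p`, saturation gives `N ∩ π F = π N`, so by Nakayama `N` is `0` or `F` according as its
image in the irreducible reduction `k ⊗ L` is `0` or everything. -/

namespace Submodule

variable {D F : Type*} [CommRing D] [AddCommGroup F] [Module D F] {N : Submodule D F}

def saturation (N : Submodule D F) : Submodule D F :=
  (torsion D (F ⧸ N)).comap N.mkQ

theorem mem_saturation_iff {y : F} : y ∈ N.saturation ↔ ∃ a ∈ D⁰, a • y ∈ N := by
  simp only [saturation, mem_comap, mkQ_apply, mem_torsion_iff, ← Quotient.mk_smul,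
    Quotient.mk_eq_zero]
  exact ⟨fun ⟨a, h⟩ => ⟨a, a.2, h⟩, fun ⟨a, ha, h⟩ => ⟨⟨a, ha⟩, h⟩⟩

theorem le_saturation : N ≤ N.saturation :=
  fun y hy => mem_saturation_iff.2 ⟨1, one_mem _, by rwa [one_smul]⟩

theorem mem_saturation_of_smul_mem {a : D} (ha : a ∈ D⁰) {y : F} (h : a • y ∈ N.saturation) :
    y ∈ N.saturation := by
  obtain ⟨b, hb, hby⟩ := mem_saturation_iff.1 h
  exact mem_saturation_iff.2 ⟨b * a, mul_mem hb ha, by rwa [mul_smul]⟩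

theorem saturation_le_comap_saturation {F' : Type*} [AddCommGroup F'] [Module D F']
    {N' : Submodule D F'} {f : F →ₗ[D] F'} (h : N ≤ N'.comap f) :
    N.saturation ≤ N'.saturation.comap f := by
  intro y hy
  obtain ⟨a, ha, hay⟩ := mem_saturation_iff.1 hy
  exact mem_saturation_iff.2 ⟨a, ha, by simpa using h hay⟩

theorem saturation_le_ker {f : F →ₗ[D] D} (h : N ≤ LinearMap.ker f) :
    N.saturation ≤ LinearMap.ker f := by
  intro y hy
  obtain ⟨a, ha, hay⟩ := mem_saturation_iff.1 hy
  have : a * f y = 0 := by simpa using h hay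
  exact (mul_left_mem_nonZeroDivisors_eq_zero_iff ha).1 this

theorem baseChange_le_comap_baseChange_s10 {R M M' A : Type*} [CommRing R] [CommRing A]
    [Algebra R A] [AddCommGroup M] [Module R M] [AddCommGroup M'] [Module R M']
    {p : Submodule R M} {q : Submodule R M'} {f : M →ₗ[R] M'} (h : p ≤ q.comap f) :
    p.baseChange A ≤ (q.baseChange A).comap (f.baseChange A) := by
  rw [baseChange_eq_span, span_le]
  rintro _ ⟨m, hm, rfl⟩
  exact tmul_mem_baseChange_of_mem 1 (h hm)

end Submodule

theorem IsDiscreteValuationRing.eq_bot_of_le_maximalIdeal_smul_top {D F : Type*} [CommRing D]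
    [IsDomain D] [IsDiscreteValuationRing D] [AddCommGroup F] [Module D F] [Module.Finite D F]
    {N : Submodule D F} (hsat : ∀ a ∈ D⁰, ∀ y, a • y ∈ N → y ∈ N)
    (hN : N ≤ IsLocalRing.maximalIdeal D • ⊤) : N = ⊥ := by
  obtain ⟨π, hπ⟩ := exists_irreducible D
  rw [hπ.maximalIdeal_eq, Submodule.ideal_span_singleton_smul] at hN
  refine Submodule.eq_bot_of_le_smul_of_le_jacobson_bot (Ideal.span {π}) N
    (IsNoetherian.noetherian N) (fun y hy => ?_)
    (hπ.maximalIdeal_eq ▸ maximalIdeal_le_jacobson ⊥)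
  obtain ⟨v, -, rfl⟩ := (Submodule.mem_smul_pointwise_iff_exists _ _ _).1 (hN hy)
  exact Submodule.smul_mem_smul (Ideal.mem_span_singleton_self π)
    (hsat π (mem_nonZeroDivisors_of_ne_zero hπ.ne_zero) v hy)

namespace AlgHom

variable {R A B L : Type*} [CommRing R] [CommRing A] [CommRing B] [Algebra R A] [Algebra R B]
  [AddCommGroup L] [Module R L]

theorem rTensor_smul (θ : A →ₐ[R] B) (a : A) (z : A ⊗[R] L) :
    θ.toLinearMap.rTensor L (a • z) = θ a • θ.toLinearMap.rTensor L z := by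
  induction z using TensorProduct.induction_on with
  | zero => simp
  | tmul c x => simp [smul_tmul']
  | add z z' hz hz' => simp [hz, hz']

theorem ker_rTensor_le_smul_top {θ : A →ₐ[R] B} (hθ : Function.Surjective θ) :
    LinearMap.ker (θ.toLinearMap.rTensor L) ≤
      (RingHom.ker θ • ⊤ : Submodule A (A ⊗[R] L)).restrictScalars R := by
  rw [(rTensor_exact L θ.toLinearMap.exact_subtype_ker_map hθ).linearMap_ker_eq]
  rintro _ ⟨w, rfl⟩
  induction w using TensorProduct.induction_on with
  | zero => simp
  | tmul a x =>
    have : (a : A) ⊗ₜ[R] x = (a : A) • (1 : A) ⊗ₜ[R] x := by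
      rw [smul_tmul', smul_eq_mul, mul_one]
    simpa [this] using
      Submodule.smul_mem_smul (show (a : A) ∈ RingHom.ker θ from a.2) Submodule.mem_top
  | add w w' hw hw' => rw [map_add]; exact add_mem hw hw'

theorem exists_mem_rTensor_eq_of_mem_span {θ : A →ₐ[R] B} (hθ : Function.Surjective θ)
    (N : Submodule A (A ⊗[R] L)) {v : B ⊗[R] L}
    (hv : v ∈ Submodule.span B (θ.toLinearMap.rTensor L '' N)) :
    ∃ n ∈ N, θ.toLinearMap.rTensor L n = v := by
  induction hv using Submodule.span_induction with
  | mem v hv => exact hv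
  | zero => exact ⟨0, N.zero_mem, map_zero _⟩
  | add _ _ _ _ h h' =>
    obtain ⟨n, hn, rfl⟩ := h
    obtain ⟨n', hn', rfl⟩ := h'
    exact ⟨n + n', N.add_mem hn hn', map_add _ _ _⟩
  | smul b _ _ h =>
    obtain ⟨n, hn, rfl⟩ := h
    obtain ⟨a, rfl⟩ := hθ b
    exact ⟨a • n, N.smul_mem a hn, θ.rTensor_smul a n⟩

end AlgHom

theorem eq_bot_or_eq_top_of_residual_irreducible {R D k G L : Type*} [CommRing R] [CommRing D]
    [IsDomain D] [IsDiscreteValuationRing D] [Algebra R D] [Field k] [Algebra R k] [Group G]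
    [AddCommGroup L] [Module R L] [Module.Finite R L]
    (θ : D →ₐ[R] k) (hθ : Function.Surjective θ) (ρ : Representation R G L)
    (hirr : ∀ W : Submodule k (k ⊗[R] L),
      (∀ g : G, ∀ x ∈ W, (ρ g).baseChange k x ∈ W) → W = ⊥ ∨ W = ⊤)
    {N : Submodule D (D ⊗[R] L)} (hN : ∀ g : G, ∀ y ∈ N, (ρ g).baseChange D y ∈ N)
    (hsat : ∀ a ∈ D⁰, ∀ y, a • y ∈ N → y ∈ N) : N = ⊥ ∨ N = ⊤ := by
  set red := θ.toLinearMap.rTensor L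
  have hker : ∀ z, red z = 0 → z ∈ maximalIdeal D • (⊤ : Submodule D (D ⊗[R] L)) := by
    have hθker : RingHom.ker θ = maximalIdeal D := ker_eq_maximalIdeal (θ : D →+* k) hθ
    exact fun z hz => hθker ▸ θ.ker_rTensor_le_smul_top hθ hz
  have hstable (g : G) : Submodule.span k (red '' N) ≤
      (Submodule.span k (red '' N)).comap ((ρ g).baseChange k) := by
    rw [Submodule.span_le]
    rintro _ ⟨n, hn, rfl⟩
    exact Submodule.subset_span ⟨_, hN g n hn, LinearMap.rTensor_baseChange θ n (ρ g)⟩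
  rcases hirr _ fun g _ hv => hstable g hv with h | h
  · refine .inl (IsDiscreteValuationRing.eq_bot_of_le_maximalIdeal_smul_top hsat fun n hn => ?_)
    refine hker n ?_
    have : red n ∈ Submodule.span k (red '' N) := Submodule.subset_span ⟨n, hn, rfl⟩
    simpa [h] using this
  · refine .inr (top_le_iff.1 (Submodule.le_of_le_smul_of_le_jacobson_bot Module.Finite.fg_top
      (maximalIdeal_le_jacobson ⊥) fun z _ => ?_))
    obtain ⟨n, hn, hnz⟩ :=
      θ.exists_mem_rTensor_eq_of_mem_span hθ N (h ▸ Submodule.mem_top (x := red z))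
    rw [← add_sub_cancel n z]
    exact Submodule.add_mem_sup hn (hker _ (by rw [map_sub, hnz, sub_self]))

theorem IsLocalization.exists_smul_eq_algebraMap_comp {R K L : Type*} [CommRing R] [CommRing K]
    [Algebra R K] (S : Submonoid R) [IsLocalization S K] [AddCommGroup L] [Module R L]
    [Module.Free R L] [Module.Finite R L] (g : L →ₗ[R] K) :
    ∃ s ∈ S, ∃ φ : L →ₗ[R] R, ∀ x, algebraMap R K (φ x) = s • g x := by
  let b := Module.Free.chooseBasis R L
  obtain ⟨s, hs⟩ := exist_integer_multiples_of_finite S fun i => g (b i)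
  choose c hc using hs
  have : Algebra.linearMap R K ∘ₗ b.constr R c = (s : R) • g := b.ext fun i => by simp [hc i]
  exact ⟨s, s.2, b.constr R c, LinearMap.congr_fun this⟩

namespace Submodule

variable {R K L : Type*} [CommRing R] [IsDomain R] [Field K] [Algebra R K] [IsFractionRing R K]
  [AddCommGroup L] [Module R L] {W : Submodule K (K ⊗[R] L)}

theorem exists_ne_zero_one_tmul_mem_of_ne_bot (hW : W ≠ ⊥) :
    ∃ x : L, x ≠ 0 ∧ (1 : K) ⊗ₜ[R] x ∈ W := by
  have : IsLocalizedModule R⁰ (TensorProduct.mk R K L 1) :=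
    (isLocalizedModule_iff_isBaseChange R⁰ K _).2 (TensorProduct.isBaseChange R L K)
  obtain ⟨w, hwW, hw0⟩ := W.ne_bot_iff.1 hW
  obtain ⟨⟨x, s⟩, hxs⟩ := IsLocalizedModule.surj R⁰ (TensorProduct.mk R K L 1) w
  have hsw : (1 : K) ⊗ₜ[R] x = algebraMap R K s • w := by
    rw [algebraMap_smul]; exact hxs.symm
  have hs0 : algebraMap R K s ≠ 0 := IsFractionRing.to_map_ne_zero_of_mem_nonZeroDivisors s.2
  refine ⟨x, fun hx => ?_, hsw ▸ W.smul_mem _ hwW⟩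
  rw [hx, tmul_zero, eq_comm, smul_eq_zero] at hsw
  exact hsw.elim hs0 hw0

theorem exists_dual_ne_zero_and_eq_zero_on_one_tmul_mem_of_ne_top [Module.Free R L]
    [Module.Finite R L] (hW : W ≠ ⊤) :
    ∃ φ : Module.Dual R L, ∃ y, φ y ≠ 0 ∧ ∀ x, (1 : K) ⊗ₜ[R] x ∈ W → φ x = 0 := by
  obtain ⟨y, hy⟩ : ∃ y : L, (1 : K) ⊗ₜ[R] y ∉ W := by
    by_contra! h
    refine hW (top_le_iff.1 ?_)
    rw [← baseChange_top K, baseChange_eq_span, span_le]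
    rintro _ ⟨x, -, rfl⟩
    exact h x
  obtain ⟨f, hfy, hfW⟩ := W.exists_dual_map_eq_bot_of_notMem hy inferInstance
  obtain ⟨s, hs, φ, hφ⟩ :=
    IsLocalization.exists_smul_eq_algebraMap_comp R⁰
      (f.restrictScalars R ∘ₗ TensorProduct.mk R K L 1)
  have hs0 : algebraMap R K s ≠ 0 := IsFractionRing.to_map_ne_zero_of_mem_nonZeroDivisors hs
  refine ⟨φ, y, fun h => ?_, fun x hx => IsFractionRing.injective R K ?_⟩
  · have := hφ y
    rw [h, map_zero, eq_comm, ← algebraMap_smul K, smul_eq_zero] at this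
    exact this.elim hs0 hfy
  · have : f ((1 : K) ⊗ₜ[R] x) = 0 := by
      simpa [hfW] using mem_map_of_mem (f := f) hx
    simp [hφ x, this]

end Submodule

theorem Ideal.mem_of_one_tmul_mem_saturation_baseChange {R L : Type*} [CommRing R]
    [AddCommGroup L] [Module R L] (I : Ideal R) {M : Submodule R L} {φ : Module.Dual R L}
    (hφ : M ≤ LinearMap.ker φ) {x : L}
    (hx : (1 : R ⧸ I) ⊗ₜ[R] x ∈ (M.baseChange (R ⧸ I)).saturation) : φ x ∈ I := by
  let φI := (Algebra.linearMap R (R ⧸ I) ∘ₗ φ).liftBaseChange (R ⧸ I)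
  have hM : M.baseChange (R ⧸ I) ≤ LinearMap.ker φI := by
    rw [Submodule.baseChange_eq_span, Submodule.span_le]
    rintro _ ⟨m, hm, rfl⟩
    simp [φI, LinearMap.mem_ker.1 (hφ hm)]
  have := Submodule.saturation_le_ker hM hx
  simpa [φI, Ideal.Quotient.eq_zero_iff_mem] using this

theorem Ideal.mem_of_one_tmul_eq_zero {R L : Type*} [CommRing R] [AddCommGroup L] [Module R L]
    (I : Ideal R) (φ : Module.Dual R L) {x : L} (hx : (1 : R ⧸ I) ⊗ₜ[R] x = 0) : φ x ∈ I :=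
  I.mem_of_one_tmul_mem_saturation_baseChange (M := ⊥) bot_le (hx ▸ zero_mem _)

theorem repn_irreducible_of_local_residual_irreducible_dvr_quotients_general
    (R : Type*) [CommRing R] [IsDomain R] [IsLocalRing R]
    (K : Type*) [Field K] [Algebra R K] [IsFractionRing R K]
    (G : Type*) [Group G]
    (L : Type*) [AddCommGroup L] [Module R L] [Module.Free R L] [Module.Finite R L]
    (ρ : Representation R G L)
    (hirr : ∀ W : Submodule (IsLocalRing.ResidueField R)
        (TensorProduct R (IsLocalRing.ResidueField R) L),
      (∀ g : G, ∀ x ∈ W, LinearMap.baseChange (IsLocalRing.ResidueField R) (ρ g) x ∈ W) →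
      W = ⊥ ∨ W = ⊤)
    (S : Set (Ideal R))
    (hSprime : ∀ p ∈ S, p.IsPrime)
    (hSint : sInf S = ⊥)
    (hSdvr : ∀ p ∈ S, ∀ hp : p.IsPrime, QuotientIsDVR p hp) :
    ∀ W : Submodule K (TensorProduct R K L),
      (∀ g : G, ∀ x ∈ W, LinearMap.baseChange K (ρ g) x ∈ W) → W = ⊥ ∨ W = ⊤ := by
  intro W hW
  by_contra! hW'
  let M : Submodule R L := (W.restrictScalars R).comap (TensorProduct.mk R K L 1)
  obtain ⟨x, hx0, hxM⟩ := Submodule.exists_ne_zero_one_tmul_mem_of_ne_bot hW'.1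
  obtain ⟨ψ, hψx⟩ := Module.Projective.exists_dual_ne_zero R hx0
  obtain ⟨φ, y, hφy, hφM⟩ :=
    Submodule.exists_dual_ne_zero_and_eq_zero_on_one_tmul_mem_of_ne_top hW'.2
  obtain ⟨p, hpS, hp⟩ : ∃ p ∈ S, ψ x * φ y ∉ p := by
    by_contra! h
    exact mul_ne_zero hψx hφy (by simpa [hSint] using Submodule.mem_sInf.2 h)
  have hpPrime := hSprime p hpS
  have : IsDiscreteValuationRing (R ⧸ p) := hSdvr p hpS hpPrime
  have hpm : p ≤ maximalIdeal R := le_maximalIdeal hpPrime.ne_top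
  have hMstable (g : G) : M ≤ M.comap (ρ g) := fun m hm => by
    simpa [M] using hW g _ hm
  rcases eq_bot_or_eq_top_of_residual_irreducible
      (Ideal.Quotient.factorₐ R hpm) (Ideal.Quotient.factor_surjective hpm) ρ hirr
      (N := (M.baseChange (R ⧸ p)).saturation)
      (fun g => Submodule.saturation_le_comap_saturation
        (Submodule.baseChange_le_comap_baseChange_s10 (hMstable g)))
      (fun a ha z => Submodule.mem_saturation_of_smul_mem ha) with hN | hN
  · have hx : (1 : R ⧸ p) ⊗ₜ[R] x = 0 := by
      rw [← Submodule.mem_bot (R ⧸ p), ← hN]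
      exact Submodule.le_saturation (Submodule.tmul_mem_baseChange_of_mem 1 hxM)
    exact hp (p.mul_mem_right _ (p.mem_of_one_tmul_eq_zero ψ hx))
  · exact hp (p.mul_mem_left _
      (p.mem_of_one_tmul_mem_saturation_baseChange hφM (hN ▸ Submodule.mem_top)))

/-- Proposition 3.7 of the paper. Let `R` be a local noetherian integral
domain with maximal ideal `m` and fraction field `K`, `G` a group, and `L` a free
`R`-module of finite rank `d ≥ 1` with a representation `ρ : G → Aut_R(L)`; set
`V := K ⊗_R L` with the induced representation `ρ_V`. Suppose the reduced representation
of `G` on the `R/m`-vector space `L/mL = (R/m) ⊗[R] L` is irreducible, and that there is a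
set `S` of prime ideals of `R` with `⋂_{p ∈ S} p = (0)` such that `R/p` is a discrete
valuation ring for every `p ∈ S`. Then `ρ_V` is irreducible. -/
theorem repn_irreducible_of_local_residual_irreducible_dvr_quotients
    (R : Type*) [CommRing R] [IsDomain R] [IsNoetherianRing R] [IsLocalRing R]
    (K : Type*) [Field K] [Algebra R K] [IsFractionRing R K]
    (G : Type*) [Group G]
    (L : Type*) [AddCommGroup L] [Module R L] [Module.Free R L] [Module.Finite R L]
    [Nontrivial L]
    (ρ : Representation R G L)
    (hirr : ∀ W : Submodule (IsLocalRing.ResidueField R)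
        (TensorProduct R (IsLocalRing.ResidueField R) L),
      (∀ g : G, ∀ x ∈ W, LinearMap.baseChange (IsLocalRing.ResidueField R) (ρ g) x ∈ W) →
      W = ⊥ ∨ W = ⊤)
    (S : Set (Ideal R))
    (hSprime : ∀ p ∈ S, p.IsPrime)
    (hSint : sInf S = ⊥)
    (hSdvr : ∀ p ∈ S, ∀ hp : p.IsPrime, QuotientIsDVR p hp) :
    ∀ W : Submodule K (TensorProduct R K L),
      (∀ g : G, ∀ x ∈ W, LinearMap.baseChange K (ρ g) x ∈ W) → W = ⊥ ∨ W = ⊤ :=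
  repn_irreducible_of_local_residual_irreducible_dvr_quotients_general R K G L ρ hirr S hSprime
    hSint hSdvr
end
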